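/- For the operators Q₁ = −[x₂(tξ−x₁)/(tξ(x₁−x₂))]T_{q,x₁}^{−1} + [x₁(tξ−x₂)/(tξ(x₁−x₂))]T_{q,x₂}^{−1} and Q₂ = −[(tξ−x₁)/(x₁−x₂)]T_{q,x₁}^{−1} + [(tξ−x₂)/(x₁−x₂)]T_{q,x₂}^{−1}, the Laurent polynomials r_ν = (x₁x₂)^{ν₂}(tξx₁^{−1}, tξx₂^{−1}; q)_{ν₂₁} satisfy Q₁ r_ν = q^{−ν₁} r_ν and Q₂ r_ν = q^{−ν₂} r_ν. -/

import Mathlib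

/-!
Write `c = tξ`. Peeling off the first or the last factor of `(c/x; q)_{m+1}` gives
`(x - c) (cq/x; q)_m = (x - cq^m) (c/x; q)_m`, so `(x₁ - c) T_{q,x₁}⁻¹ r_ν = q^{-ν₂} (x₁ - cq^{ν₂₁}) r_ν`,
and symmetrically in `x₂`. Both operators are therefore multiplication by `q^{-ν₂}` times a
rational function of `x₁, x₂`, which collapses to `q^{ν₂₁}` for `Q₁` and to `1` for `Q₂`.
-/

open Finset

/-- The q-Pochhammer symbol `(a;q)_n`. -/
noncomputable def qPoch (a q : ℂ) (n : ℕ) : ℂ := ∏ j ∈ Finset.range n, (1 - a * q ^ j)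

/-- The basis r_ν(x₁,x₂) = (x₁x₂)^{ν₂}(tξx₁⁻¹, tξx₂⁻¹; q)_{ν₂₁}. -/
noncomputable def rbasis (q t ξ : ℂ) (n1 n2 : ℤ) (x1 x2 : ℂ) : ℂ :=
  (x1 * x2) ^ n2 * qPoch (t * ξ * x1⁻¹) q (n2 - n1).toNat *
    qPoch (t * ξ * x2⁻¹) q (n2 - n1).toNat

lemma qPoch_succ (a q : ℂ) (n : ℕ) : qPoch a q (n + 1) = qPoch a q n * (1 - a * q ^ n) :=
  prod_range_succ _ n

lemma qPoch_succ' (a q : ℂ) (n : ℕ) : qPoch a q (n + 1) = (1 - a) * qPoch (a * q) q n := by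
  simp only [qPoch, prod_range_succ', pow_zero, mul_one, pow_succ, mul_assoc, mul_comm q,
    mul_comm (1 - a)]

lemma qPoch_mul_mul_one_sub (a q : ℂ) (n : ℕ) :
    qPoch (a * q) q n * (1 - a) = qPoch a q n * (1 - a * q ^ n) := by
  rw [mul_comm, ← qPoch_succ', qPoch_succ]

lemma qPoch_mul_inv_mul_mul_sub (a x q : ℂ) (hx : x ≠ 0) (n : ℕ) :
    qPoch (a * x⁻¹ * q) q n * (x - a) = qPoch (a * x⁻¹) q n * (x - a * q ^ n) := by
  linear_combination x * qPoch_mul_mul_one_sub (a * x⁻¹) q n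
    + a * (qPoch (a * x⁻¹ * q) q n - q ^ n * qPoch (a * x⁻¹) q n) * mul_inv_cancel₀ hx

lemma rbasis_comm (q t ξ : ℂ) (n1 n2 : ℤ) (x1 x2 : ℂ) :
    rbasis q t ξ n1 n2 x1 x2 = rbasis q t ξ n1 n2 x2 x1 := by
  simp only [rbasis, mul_comm x1 x2]
  ring

lemma sub_mul_rbasis_inv_mul_left (q t ξ : ℂ) (n1 n2 : ℤ) (x1 x2 : ℂ) (hx1 : x1 ≠ 0) :
    (x1 - t * ξ) * rbasis q t ξ n1 n2 (q⁻¹ * x1) x2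
      = q ^ (-n2) * (x1 - t * ξ * q ^ (n2 - n1).toNat) * rbasis q t ξ n1 n2 x1 x2 := by
  have hshift : t * ξ * (q⁻¹ * x1)⁻¹ = t * ξ * x1⁻¹ * q := by
    rw [mul_inv, inv_inv]
    ring
  have hscale : (q⁻¹ * x1 * x2) ^ n2 = q ^ (-n2) * (x1 * x2) ^ n2 := by
    rw [mul_assoc, mul_zpow, inv_zpow, zpow_neg]
  rw [rbasis, rbasis, hshift, hscale]
  linear_combination q ^ (-n2) * (x1 * x2) ^ n2 * qPoch (t * ξ * x2⁻¹) q (n2 - n1).toNat *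
    qPoch_mul_inv_mul_mul_sub (t * ξ) x1 q hx1 (n2 - n1).toNat

lemma sub_mul_rbasis_inv_mul_right (q t ξ : ℂ) (n1 n2 : ℤ) (x1 x2 : ℂ) (hx2 : x2 ≠ 0) :
    (x2 - t * ξ) * rbasis q t ξ n1 n2 x1 (q⁻¹ * x2)
      = q ^ (-n2) * (x2 - t * ξ * q ^ (n2 - n1).toNat) * rbasis q t ξ n1 n2 x1 x2 := by
  rw [rbasis_comm, sub_mul_rbasis_inv_mul_left q t ξ n1 n2 x2 x1 hx2, rbasis_comm]

/-- r_ν are eigenfunctions of the operators Q₁ and Q₂: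
Q₁ r_ν = q^{−ν₁} r_ν, Q₂ r_ν = q^{−ν₂} r_ν, where
Q₁ = −[x₂(tξ−x₁)/(tξ(x₁−x₂))]T_{q,x₁}⁻¹ + [x₁(tξ−x₂)/(tξ(x₁−x₂))]T_{q,x₂}⁻¹ and
Q₂ = −[(tξ−x₁)/(x₁−x₂)]T_{q,x₁}⁻¹ + [(tξ−x₂)/(x₁−x₂)]T_{q,x₂}⁻¹, with
T_{q,x}⁻¹ f(x) = f(q⁻¹x). -/
theorem rbasis_eigenfunctions (q t ξ : ℂ) (hq : q ≠ 0) (ht : t ≠ 0) (hξ : ξ ≠ 0)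
    (n1 n2 : ℤ) (h : n1 ≤ n2) (x1 x2 : ℂ) (h1 : x1 ≠ 0) (h2 : x2 ≠ 0)
    (hne : x1 ≠ x2) :
    (-(x2 * (t * ξ - x1) / (t * ξ * (x1 - x2))) * rbasis q t ξ n1 n2 (q⁻¹ * x1) x2
        + x1 * (t * ξ - x2) / (t * ξ * (x1 - x2)) * rbasis q t ξ n1 n2 x1 (q⁻¹ * x2)
      = q ^ (-n1) * rbasis q t ξ n1 n2 x1 x2)
    ∧ (-((t * ξ - x1) / (x1 - x2)) * rbasis q t ξ n1 n2 (q⁻¹ * x1) x2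
        + (t * ξ - x2) / (x1 - x2) * rbasis q t ξ n1 n2 x1 (q⁻¹ * x2)
      = q ^ (-n2) * rbasis q t ξ n1 n2 x1 x2) := by
  have hleft := sub_mul_rbasis_inv_mul_left q t ξ n1 n2 x1 x2 h1
  have hright := sub_mul_rbasis_inv_mul_right q t ξ n1 n2 x1 x2 h2
  have hpow : q ^ (-n1) = q ^ (n2 - n1).toNat * q ^ (-n2) := by
    rw [← zpow_natCast, ← zpow_add₀ hq, Int.toNat_of_nonneg (sub_nonneg.mpr h)]
    ring_nf
  have hx12 : x1 - x2 ≠ 0 := sub_ne_zero.mpr hne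
  rw [hpow]
  constructor
  · rw [← neg_div, div_mul_eq_mul_div, div_mul_eq_mul_div, ← add_div,
      div_eq_iff (mul_ne_zero (mul_ne_zero ht hξ) hx12)]
    linear_combination x2 * hleft - x1 * hright
  · rw [← neg_div, div_mul_eq_mul_div, div_mul_eq_mul_div, ← add_div, div_eq_iff hx12]
    linear_combination hleft - hright
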